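/- arXiv:1202.6604 — 3 statements merged into one kernel-verified Lean document; each statement's English description precedes it below -/
import Mathlib

section
/- Let k ⊂ E be a finite extension of fields and let V, W be k-vector subspaces of E of codimension 1. Then there exists α ∈ E^* such that αV = W. -/
/-!
Fix a nonzero functional `T : E → k`. The map `γ ↦ (x ↦ T (γ x))` from `E` to its dual is
injective, hence bijective by counting dimensions. A codimension-one subspace is the kernel of a
nonzero functional, so `V = ker T` and `W = ker (x ↦ T (γ x)) = γ⁻¹ V` for some `γ ≠ 0`.
-/

open Module LinearMap

theorem Submodule.exists_dual_ker_eq_of_finrank_add_one {k E : Type*} [Field k] [AddCommGroup E]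
    [Module k E] [FiniteDimensional k E] (V : Submodule k E)
    (hV : finrank k V + 1 = finrank k E) :
    ∃ φ : Module.Dual k E, ker φ = V := by
  have hq : finrank k (E ⧸ V) = finrank k k := by
    have := V.finrank_quotient_add_finrank
    rw [finrank_self]
    omega
  let e : (E ⧸ V) ≃ₗ[k] k := LinearEquiv.ofFinrankEq _ _ hq
  refine ⟨e.toLinearMap ∘ₗ V.mkQ, ?_⟩
  rw [ker_comp, LinearEquiv.ker, Submodule.comap_bot, Submodule.ker_mkQ]

theorem Submodule.ne_top_of_finrank_add_one {k E : Type*} [Field k] [AddCommGroup E]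
    [Module k E] [FiniteDimensional k E] {V : Submodule k E}
    (hV : finrank k V + 1 = finrank k E) : V ≠ ⊤ := by
  rintro rfl
  rw [finrank_top] at hV
  omega

theorem LinearMap.compr₂_mul_injective {k E : Type*} [Field k] [Field E] [Algebra k E]
    {T : Module.Dual k E} (hT : T ≠ 0) : Function.Injective ((mul k E).compr₂ T) := by
  rw [injective_iff_map_eq_zero]
  intro β hβ
  by_contra hβ0
  refine hT (LinearMap.ext fun y => ?_)
  simpa [hβ0] using LinearMap.congr_fun hβ (β⁻¹ * y)

theorem LinearMap.exists_eq_comp_mulLeft {k E : Type*} [Field k] [Field E] [Algebra k E]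
    [FiniteDimensional k E] {T : Module.Dual k E} (hT : T ≠ 0) (φ : Module.Dual k E) :
    ∃ γ : E, φ = T ∘ₗ mulLeft k γ := by
  have hsurj := (injective_iff_surjective_of_finrank_eq_finrank
    Subspace.dual_finrank_eq.symm).mp (compr₂_mul_injective hT)
  obtain ⟨γ, hγ⟩ := hsurj φ
  exact ⟨γ, hγ.symm⟩

theorem Submodule.map_mulLeft_eq_comap_mulLeft_inv {k E : Type*} [Field k] [Field E] [Algebra k E]
    (α : Eˣ) (V : Submodule k E) :
    V.map (mulLeft k (α : E)) = V.comap (mulLeft k ((α⁻¹ : Eˣ) : E)) := by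
  ext x
  simp only [Submodule.mem_map, Submodule.mem_comap, mulLeft_apply]
  constructor
  · rintro ⟨v, hv, rfl⟩
    simpa using hv
  · exact fun hx => ⟨_, hx, by simp⟩

/-- Let `k ⊂ E` be a finite extension of fields and let `V, W` be
`k`-vector subspaces of `E` of codimension 1.  Then there exists `α ∈ Eˣ` such that
`α • V = W`. -/
theorem stmt_9 (k E : Type*) [Field k] [Field E] [Algebra k E] [FiniteDimensional k E]
    (V W : Submodule k E)
    (hV : Module.finrank k V + 1 = Module.finrank k E)
    (hW : Module.finrank k W + 1 = Module.finrank k E) :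
    ∃ α : Eˣ, V.map (LinearMap.mulLeft k (α : E)) = W := by
  obtain ⟨T, rfl⟩ := V.exists_dual_ker_eq_of_finrank_add_one hV
  obtain ⟨ψ, rfl⟩ := W.exists_dual_ker_eq_of_finrank_add_one hW
  have hT : T ≠ 0 := by
    rintro rfl
    exact Submodule.ne_top_of_finrank_add_one hV ker_zero
  obtain ⟨γ, rfl⟩ := exists_eq_comp_mulLeft hT ψ
  have hγ : γ ≠ 0 := by
    rintro rfl
    exact Submodule.ne_top_of_finrank_add_one hW (by simp)
  refine ⟨(Units.mk0 γ hγ)⁻¹, ?_⟩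
  rw [Submodule.map_mulLeft_eq_comap_mulLeft_inv, inv_inv, ker_comp]
  rfl
end

section
/- Let k ⊂ F be fields of characteristic p > 0 with F^p ⊂ k, let L be a finite separable extension of k contained in a fixed algebraic closure of F, and put L' = L·F. Then the canonical homomorphism Ω^i_{L'|k} → Ω^i_{L'|L} is an isomorphism of L'-vector spaces for all i ≥ 0. -/
/-!
A separable extension `L/k` is formally unramified, so `Ω¹_{L|k} = 0`. The exact sequence
`L' ⊗_L Ω¹_{L|k} → Ω¹_{L'|k} → Ω¹_{L'|L} → 0` then makes `Ω¹_{L'|k} → Ω¹_{L'|L}` an isomorphism,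
and a linear isomorphism induces isomorphisms of all exterior powers.
-/

theorem KaehlerDifferential.map_bijective_of_formallyUnramified (R A B : Type*) [CommRing R]
    [CommRing A] [CommRing B] [Algebra R A] [Algebra R B] [Algebra A B] [IsScalarTower R A B]
    [Algebra.FormallyUnramified R A] :
    Function.Bijective (KaehlerDifferential.map R A B B) := by
  refine ⟨?_, KaehlerDifferential.map_surjective R A B⟩
  rw [← LinearMap.ker_eq_bot, ← KaehlerDifferential.range_mapBaseChange,
    LinearMap.range_eq_bot]
  exact Subsingleton.elim _ _

theorem ExteriorAlgebra.bijOn_map_exteriorPower {R M N : Type*} [CommRing R]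
    [AddCommGroup M] [Module R M] [AddCommGroup N] [Module R N]
    {f : M →ₗ[R] N} (hf : Function.Bijective f) (i : ℕ) :
    Set.BijOn (ExteriorAlgebra.map f) ↑(⋀[R]^i M) ↑(⋀[R]^i N) := by
  have hinj : Function.Injective (ExteriorAlgebra.map f) :=
    ExteriorAlgebra.map_injective ⟨(LinearEquiv.ofBijective f hf).symm.toLinearMap,
      LinearMap.ext (LinearEquiv.ofBijective f hf).symm_apply_apply⟩
  have himage : Submodule.map (ExteriorAlgebra.map f).toLinearMap (⋀[R]^i M) = ⋀[R]^i N := by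
    rw [Submodule.map_pow, ExteriorAlgebra.ι_range_map_map,
      LinearMap.range_eq_top.mpr hf.2, Submodule.map_top]
  rw [← himage, Submodule.map_coe]
  exact hinj.injOn.bijOn_image

theorem stmt_14_general
    (k L L' : Type*) [Field k] [Field L] [Field L']
    [Algebra k L] [Algebra k L'] [Algebra L L']
    [IsScalarTower k L L']
    [Algebra.IsSeparable k L] :
    ∀ i : ℕ,
      Set.BijOn (ExteriorAlgebra.map (KaehlerDifferential.map k L L' L'))
        ↑(⋀[L']^i (Ω[L'⁄k])) ↑(⋀[L']^i (Ω[L'⁄L])) := by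
  have := Algebra.FormallyUnramified.of_isSeparable k L
  exact ExteriorAlgebra.bijOn_map_exteriorPower
    (KaehlerDifferential.map_bijective_of_formallyUnramified k L L')

/-- Let `k ⊂ F` be fields of characteristic `p > 0` with
`F^p ⊆ k`, let `L` be a finite separable extension of `k`, and let `L' = L·F` be the
compositum (an extension of both `L` and `F`, generated by their images).  Then the
canonical homomorphism `Ω^i_{L'|k} → Ω^i_{L'|L}` is an isomorphism of `L'`-vector
spaces for all `i ≥ 0`; equivalently, the algebra map induced by
`Ω¹_{L'|k} → Ω¹_{L'|L}` restricts to a bijection `⋀^i Ω¹_{L'|k} → ⋀^i Ω¹_{L'|L}`. -/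
theorem stmt_14 (p : ℕ) [Fact p.Prime]
    (k F L L' : Type*) [Field k] [Field F] [Field L] [Field L']
    [Algebra k F] [Algebra k L] [Algebra k L'] [Algebra F L'] [Algebra L L']
    [IsScalarTower k F L'] [IsScalarTower k L L']
    [CharP F p] (hFp : ∀ x : F, ∃ y : k, algebraMap k F y = x ^ p)
    [FiniteDimensional k L] [Algebra.IsSeparable k L]
    (hcomp : ∀ x : L', x ∈ Subfield.closure
      (Set.range (algebraMap F L') ∪ Set.range (algebraMap L L'))) :
    ∀ i : ℕ,
      Set.BijOn (ExteriorAlgebra.map (KaehlerDifferential.map k L L' L'))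
        ↑(⋀[L']^i (Ω[L'⁄k])) ↑(⋀[L']^i (Ω[L'⁄L])) :=
  stmt_14_general k L L'
end

section
/- Let F be a field of characteristic p > 0 and let f ∈ F[T_1,...,T_k] be a nonconstant polynomial all of whose exponent vectors are divisible by p (i.e., f = Σ_α c_α T^{pα}). If every ratio c_α/c_β of nonzero coefficients of f lies in F^p, then f = c·g^p for some c ∈ F^* and some nonconstant g ∈ F[T_1,...,T_k]; in particular, f is reducible. Consequently, if X is a geometrically nonreduced, integral affine hypersurface over F, then [N_F(X):F^p] > 1. -/
/-!
If every exponent of `f` is divisible by `p` and every ratio of its coefficients is a `p`-th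
power, then after dividing by one coefficient `c` all coefficients and all monomials are `p`-th
powers, so additivity of Frobenius gives `f = c • g ^ p`, which is not irreducible.

For the hypersurface, write `a j` for the image of `X j` in the function field. If some monomial
`m` of `f` has `p ∤ m i`, then the `a j` with `j ≠ i` are algebraically independent (a nonzero
polynomial not involving `X i` is not divisible by `f`, which does involve it), and `a i` is a
root of `f` viewed as a polynomial in `X i` over `k(a j : j ≠ i)` at which the derivative
`∂f/∂X i` does not vanish: `∂f/∂X i` is nonzero of smaller `X i`-degree, so `f` does not divide
it. Thus `{a j : j ≠ i}` is a separating transcendence basis. Consequently a geometrically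
nonreduced integral hypersurface has all exponents divisible by `p`, and `[N_F(X) : F^p] ≤ 1`
would put all coefficient ratios in `F^p`, contradicting irreducibility by the first part.
-/

def IsSeparablyGenerated (F L : Type*) [Field F] [Field L] [Algebra F L] : Prop :=
  ∃ s : Set L, IsTranscendenceBasis F ((↑) : s → L) ∧
    Algebra.IsSeparable (IntermediateField.adjoin F s) L

open MvPolynomial

namespace MvPolynomial

variable {σ : Type*}

theorem exists_eq_pow_of_dvd_of_coeff_eq_pow {R : Type*} [CommSemiring R] {p : ℕ} [ExpChar R p]
    {f : MvPolynomial σ R} (hdvd : ∀ m ∈ f.support, ∀ i, p ∣ m i)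
    (hcoeff : ∀ m ∈ f.support, ∃ z, f.coeff m = z ^ p) :
    ∃ g : MvPolynomial σ R, f = g ^ p := by
  classical
  choose! z hz using hcoeff
  refine ⟨∑ m ∈ f.support, monomial (m.mapRange (· / p) (Nat.zero_div p)) (z m), ?_⟩
  rw [sum_pow_char]
  conv_lhs => rw [← support_sum_monomial_coeff f]
  refine Finset.sum_congr rfl fun m hm => ?_
  rw [monomial_pow, hz m hm]
  congr
  ext i
  simp [Nat.mul_div_cancel' (hdvd m hm i)]

theorem exists_eq_C_mul_pow_of_coeff_div_eq_pow {F : Type*} [Field F] {p : ℕ} [ExpChar F p]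
    {f : MvPolynomial σ F} (hf : f ≠ 0) (hdvd : ∀ m ∈ f.support, ∀ i, p ∣ m i)
    (hrat : ∀ m₁ ∈ f.support, ∀ m₂ ∈ f.support, ∃ z, f.coeff m₁ / f.coeff m₂ = z ^ p) :
    ∃ c g, c ≠ 0 ∧ f = C c * g ^ p := by
  obtain ⟨m₀, hm₀⟩ := support_nonempty.mpr hf
  have hc : f.coeff m₀ ≠ 0 := mem_support_iff.mp hm₀
  have hsupp : ((f.coeff m₀)⁻¹ • f).support = f.support := support_smul_eq (inv_ne_zero hc) f
  obtain ⟨g, hg⟩ := exists_eq_pow_of_dvd_of_coeff_eq_pow (f := (f.coeff m₀)⁻¹ • f)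
    (hsupp ▸ hdvd) fun m hm => by
      rw [hsupp] at hm
      simpa [inv_mul_eq_div] using hrat m hm m₀ hm₀
  refine ⟨f.coeff m₀, g, hc, ?_⟩
  rw [← hg, C_mul', smul_smul, mul_inv_cancel₀ hc, one_smul]

theorem exists_eq_C_mul_pow_and_not_irreducible {F : Type*} [Field F] {p : ℕ} [Fact p.Prime]
    [CharP F p] {f : MvPolynomial σ F} (hnc : ¬ ∃ c, f = C c)
    (hdvd : ∀ m ∈ f.support, ∀ i, p ∣ m i)
    (hrat : ∀ m₁ ∈ f.support, ∀ m₂ ∈ f.support, ∃ z, f.coeff m₁ / f.coeff m₂ = z ^ p) :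
    (∃ c g, c ≠ 0 ∧ (¬ ∃ c', g = C c') ∧ f = C c * g ^ p) ∧ ¬ Irreducible f := by
  obtain ⟨c, g, hc, rfl⟩ :=
    exists_eq_C_mul_pow_of_coeff_div_eq_pow (fun h => hnc ⟨0, by rw [h, C_0]⟩) hdvd hrat
  refine ⟨⟨c, g, hc, ?_, rfl⟩, ?_⟩
  · rintro ⟨c', rfl⟩
    exact hnc ⟨c * c' ^ p, by rw [C_mul, C_pow]⟩
  · rw [irreducible_isUnit_mul (hc.isUnit.map C)]
    exact not_irreducible_pow (Fact.out : p.Prime).ne_one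

theorem not_exists_eq_C_of_irreducible {F : Type*} [Field F] {f : MvPolynomial σ F}
    (hf : Irreducible f) : ¬ ∃ c, f = C c := by
  rintro ⟨c, rfl⟩
  rcases eq_or_ne c 0 with rfl | hc
  · rw [C_0] at hf
    exact not_irreducible_zero hf
  · exact hf.not_isUnit (hc.isUnit.map C)

variable {R : Type*} [CommRing R] {f g : MvPolynomial σ R} {i : σ} {m : σ →₀ ℕ}

theorem degreeOf_ne_zero_of_mem_support (hm : m ∈ f.support) (hmi : m i ≠ 0) :
    degreeOf i f ≠ 0 :=
  fun h => hmi (Nat.le_zero.mp ((monomial_le_degreeOf i hm).trans_eq h))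

theorem degreeOf_le_of_dvd [IsDomain R] (h : f ∣ g) (hg : g ≠ 0) (i : σ) :
    degreeOf i f ≤ degreeOf i g := by
  obtain ⟨h, rfl⟩ := h
  rw [degreeOf_mul_eq (left_ne_zero_of_mul hg) (right_ne_zero_of_mul hg)]
  exact Nat.le_add_right _ _

theorem degreeOf_rename_subtype_val (q : MvPolynomial {j // j ≠ i} R) :
    degreeOf i (rename Subtype.val q) = 0 := by
  classical
  rw [← not_ne_iff, ← mem_vars_iff_degreeOf_ne_zero]
  intro hi
  obtain ⟨j, -, hj⟩ := Finset.mem_image.mp (vars_rename Subtype.val q hi)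
  exact j.2 hj

theorem degreeOf_pderiv_lt (hf : degreeOf i f ≠ 0) : degreeOf i (pderiv i f) < degreeOf i f := by
  rw [degreeOf_lt_iff (Nat.pos_of_ne_zero hf)]
  intro m hm
  have hm' : m + Finsupp.single i 1 ∈ f.support := by
    rw [mem_support_iff, coeff_pderiv] at hm
    exact mem_support_iff.mpr (left_ne_zero_of_mul hm)
  simpa using monomial_le_degreeOf i hm'

theorem pderiv_ne_zero_of_mem_support [IsDomain R] (hm : m ∈ f.support) (hmi : (m i : R) ≠ 0) :
    pderiv i f ≠ 0 := by
  have hle : Finsupp.single i 1 ≤ m :=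
    Finsupp.single_le_iff.mpr (Nat.one_le_iff_ne_zero.mpr fun h => hmi (by rw [h, Nat.cast_zero]))
  obtain ⟨m', rfl⟩ : ∃ m', m = m' + Finsupp.single i 1 := ⟨m - _, (tsub_add_cancel_of_le hle).symm⟩
  refine ne_zero_iff.mpr ⟨m', ?_⟩
  rw [coeff_pderiv]
  exact mul_ne_zero (mem_support_iff.mp hm) (by simpa using hmi)

theorem not_dvd_pderiv_of_mem_support [IsDomain R] (hm : m ∈ f.support) (hmi : (m i : R) ≠ 0) :
    ¬ f ∣ pderiv i f := fun h =>
  (degreeOf_le_of_dvd h (pderiv_ne_zero_of_mem_support hm hmi) i).not_gt <|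
    degreeOf_pderiv_lt <|
      degreeOf_ne_zero_of_mem_support hm fun h0 => hmi (by rw [h0, Nat.cast_zero])

end MvPolynomial

theorem IsSeparable.of_aeval_derivative_ne_zero {K L : Type*} [Field K] [Field L] [Algebra K L]
    {x : L} {P : Polynomial K} (hP : Polynomial.aeval x P = 0)
    (hP' : Polynomial.aeval x (Polynomial.derivative P) ≠ 0) : IsSeparable K x := by
  have hint : IsIntegral K x := isAlgebraic_iff_isIntegral.mp
    ⟨P, fun h => hP' (by rw [h, Polynomial.derivative_zero, map_zero]), hP⟩
  obtain ⟨Q, rfl⟩ := minpoly.dvd K x hP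
  refine (Polynomial.separable_iff_derivative_ne_zero (minpoly.irreducible hint)).mpr
    fun h => hP' ?_
  rw [Polynomial.derivative_mul, h, zero_mul, zero_add, map_mul, minpoly.aeval, zero_mul]

namespace IntermediateField

variable {K L : Type*} [Field K] [Field L] [Algebra K L]

theorem isSeparable_of_adjoin_eq_top {S : Set L} (hS : adjoin K S = ⊤)
    (E : IntermediateField K L) (h : ∀ x ∈ S, IsSeparable E x) : Algebra.IsSeparable E L := by
  rw [← separableClosure.eq_top_iff, ← (restrictScalars_injective K).eq_iff, restrictScalars_top,
    eq_top_iff, ← hS, adjoin_le_iff]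
  exact h

/-- The finiteness hypotheses matter: `finrank` is `0` on infinite-dimensional spaces. -/
theorem adjoin_eq_bot_of_finrank_le_one {S : Set L} (hS : S.Finite)
    (hint : ∀ x ∈ S, IsIntegral K x) (h : Module.finrank K (adjoin K S) ≤ 1) : adjoin K S = ⊥ := by
  have := hS.to_subtype
  have := finiteDimensional_adjoin hint
  exact finrank_eq_one_iff.mp (le_antisymm h Module.finrank_pos)

end IntermediateField

section SeparatingTranscendenceBasis

variable {k K ι : Type*} [Field k] [Field K] [Algebra k K]

variable (k) in
abbrev adjoinCompl (a : ι → K) (i : ι) : IntermediateField k K :=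
  IntermediateField.adjoin k (Set.range fun j : {j // j ≠ i} ↦ a j)

noncomputable def specializeCompl (a : ι → K) (i : ι) :
    MvPolynomial ι k →ₐ[k] Polynomial (adjoinCompl k a i) := by
  classical
  exact aeval fun j ↦ if h : j = i then Polynomial.X
    else Polynomial.C ⟨a j, IntermediateField.subset_adjoin k _ ⟨⟨j, h⟩, rfl⟩⟩

variable {a : ι → K} {i : ι}

theorem aeval_specializeCompl (g : MvPolynomial ι k) :
    Polynomial.aeval (a i) (specializeCompl a i g) = aeval a g := by
  classical
  suffices ((Polynomial.aeval (a i)).restrictScalars k).comp (specializeCompl a i) = aeval a from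
    congr($this g)
  refine algHom_ext fun j => ?_
  by_cases h : j = i
  · subst h; simp [specializeCompl]
  · simp [specializeCompl, h]

theorem derivative_specializeCompl (g : MvPolynomial ι k) :
    Polynomial.derivative (specializeCompl a i g) = specializeCompl a i (pderiv i g) := by
  classical
  induction g using MvPolynomial.induction_on with
  | C c => simp
  | add g h hg hh => simp only [map_add, hg, hh]
  | mul_X g j hg =>
    rw [map_mul, Polynomial.derivative_mul, hg, pderiv_mul, map_add, map_mul, map_mul]
    by_cases h : j = i
    · subst h; simp [specializeCompl]
    · simp [specializeCompl, h, pderiv_X_of_ne h]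

variable {f : MvPolynomial ι k} (hker : ∀ g, aeval a g = 0 ↔ f ∣ g)
include hker

theorem algebraicIndependent_ne_of_ker_aeval (hi : degreeOf i f ≠ 0) :
    AlgebraicIndependent k fun j : {j // j ≠ i} ↦ a j := by
  rw [algebraicIndependent_iff]
  intro q hq
  by_contra hq0
  have hdvd : f ∣ rename Subtype.val q := (hker _).mp (by rwa [aeval_rename])
  have hq0' : rename Subtype.val q ≠ 0 :=
    (map_ne_zero_iff _ (rename_injective _ Subtype.val_injective)).mpr hq0
  exact hi (Nat.le_zero.mp (degreeOf_rename_subtype_val q ▸ degreeOf_le_of_dvd hdvd hq0' i))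

theorem isSeparable_adjoinCompl_of_ker_aeval {m : ι →₀ ℕ} (hm : m ∈ f.support)
    (hmi : (m i : k) ≠ 0) : IsSeparable (adjoinCompl k a i) (a i) := by
  refine IsSeparable.of_aeval_derivative_ne_zero (P := specializeCompl a i f) ?_ ?_
  · rw [aeval_specializeCompl, hker]
  · rw [derivative_specializeCompl, aeval_specializeCompl, Ne, hker]
    exact not_dvd_pderiv_of_mem_support hm hmi

theorem isSeparablyGenerated_of_ker_aeval (ha : IntermediateField.adjoin k (Set.range a) = ⊤)
    {m : ι →₀ ℕ} (hm : m ∈ f.support) (hmi : (m i : k) ≠ 0) : IsSeparablyGenerated k K := by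
  have hsep : Algebra.IsSeparable (adjoinCompl k a i) K := by
    refine IntermediateField.isSeparable_of_adjoin_eq_top ha _ ?_
    rintro _ ⟨j, rfl⟩
    by_cases h : j = i
    · subst h
      exact isSeparable_adjoinCompl_of_ker_aeval hker hm hmi
    · exact isSeparable_algebraMap (F := adjoinCompl k a i)
        ⟨a j, IntermediateField.subset_adjoin k _ ⟨⟨j, h⟩, rfl⟩⟩
  have hind := algebraicIndependent_ne_of_ker_aeval hker <|
    degreeOf_ne_zero_of_mem_support hm fun h0 => hmi (by rw [h0, Nat.cast_zero])
  refine ⟨_, ?_, hsep⟩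
  rw [isTranscendenceBasis_iff_algebraicIndependent_isAlgebraic, Subtype.range_coe,
    ← IntermediateField.isAlgebraic_adjoin_iff_top]
  exact ⟨hind.coe_range, Algebra.IsSeparable.isAlgebraic _ _⟩

end SeparatingTranscendenceBasis

section Hypersurface

variable {k ι : Type*} [Field k] (f : MvPolynomial ι k) (FX : Type*) [Field FX] [Algebra k FX]
  [Algebra (MvPolynomial ι k ⧸ Ideal.span {f}) FX]
  [IsScalarTower k (MvPolynomial ι k ⧸ Ideal.span {f}) FX]

noncomputable def coordinateFunction (j : ι) : FX :=
  algebraMap (MvPolynomial ι k ⧸ Ideal.span {f}) FX (Ideal.Quotient.mk _ (X j))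

theorem aeval_coordinateFunction (g : MvPolynomial ι k) :
    aeval (coordinateFunction f FX) g =
      algebraMap (MvPolynomial ι k ⧸ Ideal.span {f}) FX (Ideal.Quotient.mk _ g) :=
  congr($((aeval_unique ((IsScalarTower.toAlgHom k _ FX).comp
    (Ideal.Quotient.mkₐ k (Ideal.span {f})))).symm) g)

variable [IsFractionRing (MvPolynomial ι k ⧸ Ideal.span {f}) FX]

theorem aeval_coordinateFunction_eq_zero_iff (g : MvPolynomial ι k) :
    aeval (coordinateFunction f FX) g = 0 ↔ f ∣ g := by
  rw [aeval_coordinateFunction, IsFractionRing.to_map_eq_zero_iff, Ideal.Quotient.eq_zero_iff_mem,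
    Ideal.mem_span_singleton]

theorem adjoin_range_coordinateFunction :
    IntermediateField.adjoin k (Set.range (coordinateFunction f FX)) = ⊤ := by
  have hmem (g : MvPolynomial ι k) : algebraMap (MvPolynomial ι k ⧸ Ideal.span {f}) FX
      (Ideal.Quotient.mk _ g) ∈
        IntermediateField.adjoin k (Set.range (coordinateFunction f FX)) := by
    rw [← aeval_coordinateFunction]
    apply IntermediateField.algebra_adjoin_le_adjoin
    rw [Algebra.adjoin_range_eq_range_aeval]
    exact ⟨g, rfl⟩
  rw [eq_top_iff]
  intro z _
  obtain ⟨x, y, -, rfl⟩ := IsFractionRing.div_surjective (A := MvPolynomial ι k ⧸ Ideal.span {f}) z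
  obtain ⟨g, rfl⟩ := Ideal.Quotient.mk_surjective x
  obtain ⟨h, rfl⟩ := Ideal.Quotient.mk_surjective y
  exact div_mem (hmem g) (hmem h)

theorem isSeparablyGenerated_of_mem_support {m : ι →₀ ℕ} (hm : m ∈ f.support) {i : ι}
    (hmi : (m i : k) ≠ 0) : IsSeparablyGenerated k FX :=
  isSeparablyGenerated_of_ker_aeval (aeval_coordinateFunction_eq_zero_iff f FX)
    (adjoin_range_coordinateFunction f FX) hm hmi

end Hypersurface

/-- Let `F` be a field of characteristic `p > 0`.
(1) If `f ∈ F[T₁,…,T_κ]` is a nonconstant polynomial all of whose exponent vectors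
are divisible by `p` and all ratios of whose nonzero coefficients lie in `F^p`, then
`f = c·g^p` for some `c ∈ F^*` and some nonconstant `g`; in particular `f` is
reducible (not irreducible).
(2) Consequently, if `X` is a geometrically nonreduced integral affine hypersurface
over `F` (defined by an irreducible `f`, with function field `F(X)` the fraction
field of `F[T₁,…,T_κ]/(f)`, geometric nonreducedness meaning that `F(X)` is not
separably generated over `F`), then `[N_F(X):F^p] > 1`, where
`N_F(X) = F^p(ratios of nonzero coefficients of f)`; here `F^p` is modelled by a
field `k` mapping onto `F^p ⊆ F`. -/
theorem stmt_16 (p : ℕ) [Fact p.Prime] (F : Type*) [Field F] [CharP F p] :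
    (∀ (κ : ℕ) (f : MvPolynomial (Fin κ) F),
      (¬ ∃ c : F, f = MvPolynomial.C c) →
      (∀ m ∈ f.support, ∀ i : Fin κ, p ∣ m i) →
      (∀ m₁ ∈ f.support, ∀ m₂ ∈ f.support, ∃ z : F,
          f.coeff m₁ / f.coeff m₂ = z ^ p) →
      (∃ (c : F) (g : MvPolynomial (Fin κ) F), c ≠ 0 ∧
          (¬ ∃ c' : F, g = MvPolynomial.C c') ∧ f = MvPolynomial.C c * g ^ p) ∧
        ¬ Irreducible f) ∧
    (∀ (κ : ℕ) (f : MvPolynomial (Fin κ) F) (FX : Type*) [Field FX] [Algebra F FX]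
        [Algebra (MvPolynomial (Fin κ) F ⧸ Ideal.span {f}) FX]
        [IsScalarTower F (MvPolynomial (Fin κ) F ⧸ Ideal.span {f}) FX]
        [IsFractionRing (MvPolynomial (Fin κ) F ⧸ Ideal.span {f}) FX],
      Irreducible f →
      ¬ IsSeparablyGenerated F FX →
      ∀ (k : Type*) [Field k] [Algebra k F],
        (∀ x : F, (∃ y : k, algebraMap k F y = x) ↔ (∃ z : F, z ^ p = x)) →
        1 < Module.finrank k
          (IntermediateField.adjoin k
            {x : F | ∃ m₁ ∈ f.support, ∃ m₂ ∈ f.support,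
              x = f.coeff m₁ / f.coeff m₂})) := by
  refine ⟨fun κ f => exists_eq_C_mul_pow_and_not_irreducible, ?_⟩
  intro κ f FX _ _ _ _ _ hirr hnsep k _ _ hk
  have hdvd : ∀ m ∈ f.support, ∀ i, p ∣ m i := fun m hm i => by_contra fun hpi =>
    hnsep (isSeparablyGenerated_of_mem_support f FX hm (by rwa [Ne, CharP.cast_eq_zero_iff F p]))
  by_contra! hle
  set S := {x : F | ∃ m₁ ∈ f.support, ∃ m₂ ∈ f.support, x = f.coeff m₁ / f.coeff m₂}
  have hSfin : S.Finite :=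
    ((f.support.finite_toSet.image2 _ f.support.finite_toSet).subset
      (by rintro _ ⟨m₁, h₁, m₂, h₂, rfl⟩; exact ⟨m₁, h₁, m₂, h₂, rfl⟩))
  have hint (x : F) (_ : x ∈ S) : IsIntegral k x := by
    obtain ⟨y, hy⟩ := (hk (x ^ p)).mpr ⟨x, rfl⟩
    exact IsIntegral.of_pow (Fact.out : p.Prime).pos (hy ▸ isIntegral_algebraMap)
  have hbot := IntermediateField.adjoin_eq_bot_of_finrank_le_one hSfin hint hle
  have hrat (m₁) (h₁ : m₁ ∈ f.support) (m₂) (h₂ : m₂ ∈ f.support) :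
      ∃ z, f.coeff m₁ / f.coeff m₂ = z ^ p := by
    have hmem : f.coeff m₁ / f.coeff m₂ ∈ IntermediateField.adjoin k S :=
      IntermediateField.subset_adjoin k S ⟨m₁, h₁, m₂, h₂, rfl⟩
    rw [hbot, IntermediateField.mem_bot] at hmem
    obtain ⟨z, hz⟩ := (hk _).mp hmem
    exact ⟨z, hz.symm⟩
  exact (exists_eq_C_mul_pow_and_not_irreducible
    (not_exists_eq_C_of_irreducible hirr) hdvd hrat).2 hirr
end
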